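/- Let n ≥ 2 and m ≥ 1 be integers, let i be an integer with 0 ≤ i ≤ m−1, let u_j(s) = cosh(s)^j · sinh(s)^{2−n−m} for s > 0, and let κ_j = (m−j−1)(m+n−2−j). Then for every s > 0, applying successively the operators (𝒟_m − κ_i), (𝒟_m − κ_{i−2}), …, (𝒟_m − κ_{i−2⌊i/2⌋}) (in this order, (𝒟_m − κ_i) applied first) to u_i yields the zero function: ((𝒟_m − κ_{i−2⌊i/2⌋}) ∘ ⋯ ∘ (𝒟_m − κ_{i−2}) ∘ (𝒟_m − κ_i)) u_i (s) = 0. -/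

import Mathlib

/-- The second-order operator `𝒟_k f (s) = f''(s) + (n-1)·coth(s)·f'(s)
    - (k(k+n-2)/sinh²(s))·f(s)`. -/
noncomputable def Dop (n k : ℤ) (f : ℝ → ℝ) : ℝ → ℝ := fun s =>
  deriv (deriv f) s + ((n : ℝ) - 1) * (Real.cosh s / Real.sinh s) * deriv f s
    - ((k : ℝ) * ((k : ℝ) + (n : ℝ) - 2) / (Real.sinh s) ^ 2) * f s

/-- `(𝒟_k - c) f = 𝒟_k f - c·f`. -/
noncomputable def Aop (n k : ℤ) (c : ℝ) (f : ℝ → ℝ) : ℝ → ℝ := fun s =>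
  Dop n k f s - c * f s

/-- `chainA n m κ i q` is the composition
    `(𝒟_m - κ_{i-2(q-1)}) ∘ ⋯ ∘ (𝒟_m - κ_{i-2}) ∘ (𝒟_m - κ_i)`,
    i.e. the operators `(𝒟_m - κ_{i-2p})` for `p = 0, …, q-1`, with `p = 0` applied first. -/
noncomputable def chainA (n m : ℤ) (κ : ℤ → ℝ) (i : ℤ) : ℕ → (ℝ → ℝ) → (ℝ → ℝ)
  | 0 => id
  | q + 1 => fun f => Aop n m (κ (i - 2 * (q : ℤ))) (chainA n m κ i q f)

/-! With `c = cosh s`, `t = sinh s` and `b = 2 - n - m`, a direct computation using `c² = 1 + t²`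
gives `(𝒟_m - κ_j)(c^j t^b) = -j(j-1) c^(j-2) t^b`: the exponent `b` is chosen so that
`b(b+n-2) = m(m+n-2)`, which cancels the `t^(b-2)` terms. Hence the chain of `q` operators maps `u_i`
to `∏_{p<q} -(i-2p)(i-2p-1) · u_(i-2q)`, and for `q = ⌊i/2⌋ + 1` the last factor vanishes because
`i - 2⌊i/2⌋ ∈ {0, 1}`. -/

open Real Set Finset

noncomputable def coshSinhPow (a b : ℤ) (s : ℝ) : ℝ := cosh s ^ a * sinh s ^ b

section coshSinhPow

variable {a b : ℤ} {s : ℝ}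

lemma cosh_div_sinh_mul_coshSinhPow (hs : s ≠ 0) :
    cosh s / sinh s * coshSinhPow a b s = coshSinhPow (a + 1) (b - 1) s := by
  simp only [coshSinhPow, zpow_add_one₀ (cosh_pos s).ne', zpow_sub_one₀ (sinh_ne_zero.2 hs)]
  ring

lemma coshSinhPow_div_sinh_sq (hs : s ≠ 0) :
    coshSinhPow a b s / sinh s ^ 2 = coshSinhPow a (b - 2) s := by
  simp only [coshSinhPow, zpow_sub₀ (sinh_ne_zero.2 hs), zpow_ofNat]
  ring

lemma coshSinhPow_add_two_left (hs : s ≠ 0) :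
    coshSinhPow (a + 2) b s = coshSinhPow a b s + coshSinhPow a (b + 2) s := by
  simp only [coshSinhPow, zpow_add₀ (cosh_pos s).ne', zpow_add₀ (sinh_ne_zero.2 hs),
    zpow_ofNat, cosh_sq]
  ring

lemma hasDerivAt_coshSinhPow (hs : s ≠ 0) :
    HasDerivAt (coshSinhPow a b)
      (a * coshSinhPow (a - 1) (b + 1) s + b * coshSinhPow (a + 1) (b - 1) s) s := by
  have hc : cosh s ≠ 0 := (cosh_pos s).ne'
  have ht : sinh s ≠ 0 := sinh_ne_zero.2 hs
  have hcosh := (hasDerivAt_zpow a (cosh s) (Or.inl hc)).comp s (hasDerivAt_cosh s)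
  have hsinh := (hasDerivAt_zpow b (sinh s) (Or.inl ht)).comp s (hasDerivAt_sinh s)
  refine (hcosh.mul hsinh).congr_deriv ?_
  simp only [coshSinhPow, Function.comp, zpow_add_one₀ hc, zpow_add_one₀ ht, zpow_sub_one₀ hc,
    zpow_sub_one₀ ht]
  field_simp

lemma deriv_coshSinhPow (hs : s ≠ 0) :
    deriv (coshSinhPow a b) s =
      a * coshSinhPow (a - 1) (b + 1) s + b * coshSinhPow (a + 1) (b - 1) s :=
  (hasDerivAt_coshSinhPow hs).deriv

lemma deriv_deriv_coshSinhPow (hs : s ≠ 0) :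
    deriv (deriv (coshSinhPow a b)) s =
      a * (a - 1) * coshSinhPow (a - 2) (b + 2) s + (2 * a * b + a + b) * coshSinhPow a b s
        + b * (b - 1) * coshSinhPow (a + 2) (b - 2) s := by
  have hderiv : deriv (coshSinhPow a b) =ᶠ[nhds s]
      fun t => a * coshSinhPow (a - 1) (b + 1) t + b * coshSinhPow (a + 1) (b - 1) t :=
    Filter.eventually_of_mem (isOpen_compl_singleton.mem_nhds hs) fun t ht => deriv_coshSinhPow ht
  rw [hderiv.deriv_eq]
  refine ((((hasDerivAt_coshSinhPow hs).const_mul _).add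
    ((hasDerivAt_coshSinhPow hs).const_mul _)).deriv).trans ?_
  simp only [show a - 1 - 1 = a - 2 by ring, show b + 1 + 1 = b + 2 by ring,
    show a - 1 + 1 = a by ring, show b + 1 - 1 = b by ring, show a + 1 - 1 = a by ring,
    show b - 1 + 1 = b by ring, show a + 1 + 1 = a + 2 by ring, show b - 1 - 1 = b - 2 by ring]
  push_cast
  ring

lemma Dop_coshSinhPow (n k : ℤ) (hs : s ≠ 0) :
    Dop n k (coshSinhPow a b) s =
      a * (a - 1) * coshSinhPow (a - 2) (b + 2) s
        + (2 * a * b + a + b + (n - 1) * a) * coshSinhPow a b s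
        + b * (b + n - 2) * coshSinhPow (a + 2) (b - 2) s
        - k * (k + n - 2) * coshSinhPow a (b - 2) s := by
  have hcoth₁ := cosh_div_sinh_mul_coshSinhPow (a := a - 1) (b := b + 1) hs
  have hcoth₂ := cosh_div_sinh_mul_coshSinhPow (a := a + 1) (b := b - 1) hs
  have hcsch := coshSinhPow_div_sinh_sq (a := a) (b := b) hs
  rw [sub_add_cancel, add_sub_cancel_right] at hcoth₁
  rw [show a + 1 + 1 = a + 2 by ring, show b - 1 - 1 = b - 2 by ring] at hcoth₂
  rw [Dop, deriv_deriv_coshSinhPow hs, deriv_coshSinhPow hs]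
  linear_combination (n - 1) * a * hcoth₁ + (n - 1) * b * hcoth₂ - k * (k + n - 2) * hcsch

lemma Aop_coshSinhPow (n k j : ℤ) (hs : s ≠ 0) :
    Aop n k ((k - j - 1) * (k + n - 2 - j) : ℤ) (coshSinhPow j (2 - n - k)) s
      = -(j * (j - 1)) * coshSinhPow (j - 2) (2 - n - k) s := by
  have hj := coshSinhPow_add_two_left (a := j - 2) (b := 2 - n - k) hs
  have hb := coshSinhPow_add_two_left (a := j) (b := 2 - n - k - 2) hs
  rw [sub_add_cancel] at hj hb
  rw [Aop, Dop_coshSinhPow n k hs]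
  push_cast
  linear_combination (-(j * (j - 1) : ℝ)) * hj + (2 - n - k) * (-k) * hb

end coshSinhPow

lemma Aop_eqOn {n k : ℤ} {c : ℝ} {f g : ℝ → ℝ} {U : Set ℝ} (hU : IsOpen U) (hfg : EqOn f g U) :
    EqOn (Aop n k c f) (Aop n k c g) U := by
  intro s hs
  simp only [Aop, Dop, hfg hs, (hfg.deriv hU) hs, ((hfg.deriv hU).deriv hU) hs]

lemma Aop_const_mul (n k : ℤ) (c a : ℝ) (f : ℝ → ℝ) (s : ℝ) :
    Aop n k c (fun t => a * f t) s = a * Aop n k c f s := by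
  simp only [Aop, Dop, deriv_const_mul_field']
  ring

lemma chainA_coshSinhPow (n m : ℤ) {κ : ℤ → ℝ}
    (hκ : ∀ j : ℤ, κ j = ((m - j - 1) * (m + n - 2 - j) : ℤ)) (i : ℤ) (q : ℕ) :
    EqOn (chainA n m κ i q (coshSinhPow i (2 - n - m)))
      (fun s => (∏ p ∈ range q, -((i - 2 * p : ℤ) * ((i - 2 * p : ℤ) - 1) : ℝ))
        * coshSinhPow (i - 2 * q) (2 - n - m) s) {0}ᶜ := by
  induction q with
  | zero => intro s _; simp [chainA]
  | succ q ih =>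
    intro s hs
    dsimp only [chainA]
    rw [Aop_eqOn isOpen_compl_singleton ih hs, Aop_const_mul, hκ,
      Aop_coshSinhPow n m _ hs, prod_range_succ,
      show i - 2 * (q : ℤ) - 2 = i - 2 * ((q + 1 : ℕ) : ℤ) by push_cast; ring]
    ring

theorem stmt_6_general (n m : ℤ)
    (i : ℤ) (hi0 : 0 ≤ i)
    (u : ℤ → ℝ → ℝ)
    (hu : ∀ (j : ℤ) (s : ℝ), u j s = Real.cosh s ^ j * Real.sinh s ^ (2 - n - m))
    (κ : ℤ → ℝ) (hκ : ∀ j : ℤ, κ j = ((m - j - 1) * (m + n - 2 - j) : ℤ))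
    (s : ℝ) (hs : 0 < s) :
    chainA n m κ i ((i / 2).toNat + 1) (u i) s = 0 := by
  have hu_i : u i = coshSinhPow i (2 - n - m) := funext (hu i)
  rw [hu_i, chainA_coshSinhPow n m hκ i _ hs.ne']
  set Q := (i / 2).toNat
  have hlast : i - 2 * (Q : ℤ) = 0 ∨ i - 2 * (Q : ℤ) = 1 := by omega
  refine mul_eq_zero_of_left (prod_eq_zero (self_mem_range_succ Q) ?_) _
  rcases hlast with h | h <;> simp [h]

/-- The cancellation identity in the proof of Lemma `L:Ind`:
    `((𝒟_m - κ_{i-2⌊i/2⌋}) ∘ ⋯ ∘ (𝒟_m - κ_{i-2}) ∘ (𝒟_m - κ_i)) u_i = 0`,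
    where `u_j(s) = cosh^j(s) sinh^{2-n-m}(s)` and `κ_j = (m-j-1)(m+n-2-j)`. -/
theorem stmt_6 (n m : ℤ) (hn : 2 ≤ n) (hm : 1 ≤ m)
    (i : ℤ) (hi0 : 0 ≤ i) (him : i ≤ m - 1)
    (u : ℤ → ℝ → ℝ)
    (hu : ∀ (j : ℤ) (s : ℝ), u j s = Real.cosh s ^ j * Real.sinh s ^ (2 - n - m))
    (κ : ℤ → ℝ) (hκ : ∀ j : ℤ, κ j = ((m - j - 1) * (m + n - 2 - j) : ℤ))
    (s : ℝ) (hs : 0 < s) :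
    chainA n m κ i ((i / 2).toNat + 1) (u i) s = 0 :=
  stmt_6_general n m i hi0 u hu κ hκ s hs
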